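/- Fix γ ∈ (0,1) and μ > 0. Let g be a concave traveling wave with speed v, support [L,0] and phenotypic threshold s. Then g(0) = g(L) = 0, sup_{x∈ℝ} g(x) = γ, and g(x) = Φ_s[g](x + v) for all x ∈ [L, 0]. -/

import Mathlib

/-- `π(x) = x` if `x ≥ 0`, and `−∞` otherwise. -/
noncomputable def piE (x : EReal) : EReal := if 0 ≤ x then x else ⊥

/-- Concavity for `ℝ ∪ {−∞}`-valued functions (modeled as `ℝ → EReal`). -/
def ConcaveE (h : ℝ → EReal) : Prop :=
  ∀ x x' t : ℝ, 0 ≤ t → t ≤ 1 →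
    ((t : EReal) * h x + ((1 - t : ℝ) : EReal) * h x') ≤ h (t * x + (1 - t) * x')

/-- `Φ_ξ[g](x) = 1 − γ + sup_y ( g(y) − |x − y| ) − μ·max(ξ − x, 0)`. -/
noncomputable def Phi (γ μ : ℝ) (g : ℝ → EReal) (ξ x : ℝ) : EReal :=
  ((1 - γ : ℝ) : EReal) + (⨆ y : ℝ, g y - ((|x - y| : ℝ) : EReal))
    - ((μ * max (ξ - x) 0 : ℝ) : EReal)

/-- The phenotypic threshold `s = sup{ ξ ∈ ℝ : sup_x Φ_ξ[g](x) ≥ γ }`. -/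
noncomputable def sNext (γ μ : ℝ) (g : ℝ → EReal) : ℝ :=
  sSup {ξ : ℝ | (γ : EReal) ≤ ⨆ x : ℝ, Phi γ μ g ξ x}

/-- The deterministic dynamic: `g_n = π ∘ Φ_{s_n}[g_{n−1}]` with
`s_n = sNext γ μ g_{n−1}`. -/
noncomputable def gIter (γ μ : ℝ) (g0 : ℝ → EReal) : ℕ → ℝ → EReal
  | 0 => g0
  | n + 1 => fun x =>
      piE (Phi γ μ (gIter γ μ g0 n) (sNext γ μ (gIter γ μ g0 n)) x)

/-- A concave `g` with `sup{x : g x > 0} = 0`, `L = inf{x : g x > 0} > −∞`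
(and `g = −∞` outside `[L,0]`) is a traveling wave with speed `v` if the
dynamic has the effect of shifting `g` by `v` at every step. -/
def IsTravelingWave (γ μ : ℝ) (g : ℝ → EReal) (v L : ℝ) : Prop :=
  ConcaveE g ∧
  {x : ℝ | 0 < g x}.Nonempty ∧
  BddBelow {x : ℝ | 0 < g x} ∧
  sSup {x : ℝ | 0 < g x} = 0 ∧
  sInf {x : ℝ | 0 < g x} = L ∧
  (∀ x : ℝ, x ∉ Set.Icc L 0 → g x = ⊥) ∧
  (∀ n : ℕ, 1 ≤ n → ∀ x : ℝ, gIter γ μ g n x = g (x - n * v))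

/-!
Write `Φ_ξ[g](x) = 1 - γ + w x - μ (ξ - x)⁺`, where the sup-convolution `w = sup_y (g y - |· - y|)`
is real-valued and `1`-Lipschitz. The wave relation `π (Φ_s[g] (x + v)) = g x` makes
`Φ_s[g] (· + v)` negative off `[L, 0]` and, by concavity of `g`, positive on `(L, 0)`; by continuity
it vanishes at `L` and `0` and coincides with `g` on `[L, 0]`. Hence `sup g = sup_x Φ_s[g] x`.
As a function of `ξ`, `sup_x Φ_ξ[g] x` is continuous and tends to `-∞`, so it equals `γ` at
`s = sup {ξ | sup_x Φ_ξ[g] x ≥ γ}`, once this set is known to be nonempty.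
-/

open Set

theorem piE_le (x : EReal) : piE x ≤ x := by
  unfold piE; split_ifs <;> simp

theorem piE_of_nonneg {x : EReal} (hx : 0 ≤ x) : piE x = x := if_pos hx

theorem piE_eq_bot_iff {x : EReal} : piE x = ⊥ ↔ x < 0 := by
  unfold piE
  split_ifs with hx
  · exact ⟨fun h => absurd (h ▸ hx) (by simp), fun h => absurd hx (not_le.2 h)⟩
  · simpa using hx

theorem piE_of_ne_bot {x : EReal} (hx : piE x ≠ ⊥) : piE x = x :=
  piE_of_nonneg (not_lt.1 (mt piE_eq_bot_iff.2 hx))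

theorem iSup_piE {ι : Sort*} {f : ι → EReal} (h : ∃ i, 0 ≤ f i) :
    ⨆ i, piE (f i) = ⨆ i, f i := by
  obtain ⟨i₀, hi₀⟩ := h
  refine le_antisymm (iSup_mono fun i => piE_le _) (iSup_le fun i => ?_)
  rcases le_or_gt 0 (f i) with hi | hi
  · exact (piE_of_nonneg hi).ge.trans (le_iSup (fun i => piE (f i)) i)
  · calc f i ≤ f i₀ := hi.le.trans hi₀
      _ = piE (f i₀) := (piE_of_nonneg hi₀).symm
      _ ≤ ⨆ i, piE (f i) := le_iSup (fun i => piE (f i)) i₀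

theorem ConcaveE.pos_of_lt_of_lt {h : ℝ → EReal} (hh : ConcaveE h) {a y b : ℝ} (hay : a < y)
    (hyb : y < b) (ha : 0 < h a) (hb : 0 < h b) : 0 < h y := by
  have hab : 0 < b - a := sub_pos.2 (hay.trans hyb)
  set t := (y - a) / (b - a)
  have ht0 : 0 < t := div_pos (sub_pos.2 hay) hab
  have ht1 : t < 1 := (div_lt_one hab).2 (by linarith)
  have hy : t * b + (1 - t) * a = y := by simp only [t]; field_simp; ring
  calc 0 < ((1 - t : ℝ) : EReal) * h a := EReal.mul_pos (by exact_mod_cast sub_pos.2 ht1) ha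
    _ ≤ (t : EReal) * h b + ((1 - t : ℝ) : EReal) * h a :=
      le_add_of_nonneg_left (EReal.mul_pos (by exact_mod_cast ht0) hb).le
    _ ≤ h y := hy ▸ hh b a t ht0.le ht1.le

theorem Continuous.apply_sSup_setOf_le_eq {f : ℝ → ℝ} (hf : Continuous f) {c : ℝ}
    (hne : {x | c ≤ f x}.Nonempty) (hbdd : BddAbove {x | c ≤ f x}) :
    f (sSup {x | c ≤ f x}) = c := by
  refine le_antisymm ?_ ((isClosed_le continuous_const hf).csSup_mem hne hbdd)
  have hgt : ∀ x ∈ Ioi (sSup {x | c ≤ f x}), f x ≤ c :=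
    fun x hx => (not_le.1 fun h => not_le.2 hx (le_csSup hbdd h)).le
  exact le_on_closure hgt hf.continuousOn continuousOn_const
    (by rw [closure_Ioi]; exact self_mem_Ici)

noncomputable def supConv (g : ℝ → EReal) (x : ℝ) : EReal :=
  ⨆ y, g y - ((|x - y| : ℝ) : EReal)

section SupConv

variable {g : ℝ → EReal}

theorem Phi_eq_supConv (γ μ : ℝ) (g : ℝ → EReal) (ξ x : ℝ) :
    Phi γ μ g ξ x = ((1 - γ : ℝ) : EReal) + supConv g x - ((μ * max (ξ - x) 0 : ℝ) : EReal) :=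
  rfl

theorem sub_abs_le_supConv (g : ℝ → EReal) (x y : ℝ) :
    g y - ((|x - y| : ℝ) : EReal) ≤ supConv g x :=
  le_iSup (fun y => g y - ((|x - y| : ℝ) : EReal)) y

theorem le_supConv_add_abs (g : ℝ → EReal) (x y : ℝ) :
    g y ≤ supConv g x + ((|x - y| : ℝ) : EReal) :=
  (EReal.sub_le_iff_le_add (.inl (EReal.coe_ne_bot _)) (.inl (EReal.coe_ne_top _))).1
    (sub_abs_le_supConv g x y)

theorem supConv_sub_abs_le (g : ℝ → EReal) (x x' : ℝ) :
    supConv g x' - ((|x - x'| : ℝ) : EReal) ≤ supConv g x := by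
  refine EReal.sub_le_of_le_add (iSup_le fun y => EReal.sub_le_of_le_add ?_)
  calc g y ≤ supConv g x + ((|x - y| : ℝ) : EReal) := le_supConv_add_abs g x y
    _ ≤ supConv g x + ((|x - x'| + |x' - y| : ℝ) : EReal) := by
      gcongr; exact abs_sub_le x x' y
    _ = supConv g x + ((|x - x'| : ℝ) : EReal) + ((|x' - y| : ℝ) : EReal) := by
      rw [EReal.coe_add, add_assoc]

theorem supConv_ne_bot {y : ℝ} (hy : g y ≠ ⊥) (x : ℝ) : supConv g x ≠ ⊥ := by
  refine ne_bot_of_le_ne_bot ?_ (sub_abs_le_supConv g x y)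
  rw [sub_eq_add_neg, ← EReal.coe_neg]
  exact EReal.add_ne_bot_iff.2 ⟨hy, EReal.coe_ne_bot _⟩

theorem supConv_eq_top {x : ℝ} (hx : supConv g x = ⊤) (x' : ℝ) : supConv g x' = ⊤ := by
  have := supConv_sub_abs_le g x' x
  rwa [hx, EReal.top_sub_coe, top_le_iff] at this

theorem supConv_le {c : EReal} (hc : ∀ y, g y ≤ c) (x : ℝ) : supConv g x ≤ c :=
  iSup_le fun y => (EReal.sub_le_sub le_rfl (EReal.coe_nonneg.2 (abs_nonneg _))).trans
    (by rw [sub_zero]; exact hc y)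

theorem supConv_comp_sub (g : ℝ → EReal) (v x : ℝ) :
    supConv (fun y => g (y - v)) x = supConv g (x - v) := by
  rw [supConv, ← (Equiv.addRight v).iSup_comp]
  simp only [Equiv.coe_addRight, add_sub_cancel_right, supConv, sub_add_eq_sub_sub_swap]

theorem Phi_comp_sub (γ μ : ℝ) (g : ℝ → EReal) (v ξ x : ℝ) :
    Phi γ μ (fun y => g (y - v)) ξ x = Phi γ μ g (ξ - v) (x - v) := by
  rw [Phi_eq_supConv, Phi_eq_supConv, supConv_comp_sub, sub_sub_sub_cancel_right]

theorem iSup_Phi_comp_sub (γ μ : ℝ) (g : ℝ → EReal) (v ξ : ℝ) :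
    ⨆ x, Phi γ μ (fun y => g (y - v)) ξ x = ⨆ x, Phi γ μ g (ξ - v) x := by
  simp only [Phi_comp_sub]
  exact (Equiv.subRight v).iSup_comp (g := Phi γ μ g (ξ - v))

end SupConv

section RealValued

variable {g : ℝ → EReal} {w : ℝ → ℝ}

theorem lipschitzWith_one_of_supConv_eq (hw : ∀ x, supConv g x = w x) : LipschitzWith 1 w :=
  LipschitzWith.of_le_add_mul 1 fun x y => by
    have h := supConv_sub_abs_le g y x
    rw [hw, hw, ← EReal.coe_sub, EReal.coe_le_coe_iff, abs_sub_comm] at h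
    rw [NNReal.coe_one, one_mul, Real.dist_eq]
    linarith

theorem le_add_abs_of_supConv_eq (hw : ∀ x, supConv g x = w x) (x y : ℝ) :
    g y ≤ ((w x + |x - y| : ℝ) : EReal) := by
  rw [EReal.coe_add, ← hw]
  exact le_supConv_add_abs g x y

theorem add_sub_le_of_supConv_eq (hw : ∀ x, supConv g x = w x) (hg : ∀ y, 0 < y → g y = ⊥)
    {x x' : ℝ} (hx : 0 ≤ x) (hxx' : x ≤ x') : w x' + (x' - x) ≤ w x := by
  suffices supConv g x' ≤ ((w x - (x' - x) : ℝ) : EReal) by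
    rw [hw, EReal.coe_le_coe_iff] at this
    linarith
  refine iSup_le fun y => EReal.sub_le_of_le_add ?_
  rcases le_or_gt y 0 with hy | hy
  · rw [← EReal.coe_add, show w x - (x' - x) + |x' - y| = w x + |x - y| by
      rw [abs_of_nonneg (by linarith), abs_of_nonneg (by linarith)]; ring]
    exact le_add_abs_of_supConv_eq hw x y
  · rw [hg y hy]
    exact bot_le

theorem le_sub_max_of_supConv_eq (hw : ∀ x, supConv g x = w x) (hg : ∀ y, 0 < y → g y = ⊥)
    {B : ℝ} (hB : ∀ y, g y ≤ B) (x : ℝ) : w x ≤ B - max x 0 := by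
  have hwB : ∀ x, w x ≤ B := fun x => EReal.coe_le_coe_iff.1 (hw x ▸ supConv_le hB x)
  rcases le_or_gt x 0 with hx | hx
  · rw [max_eq_right hx, sub_zero]
    exact hwB x
  · rw [max_eq_left hx.le]
    linarith [add_sub_le_of_supConv_eq hw hg le_rfl hx.le, hwB 0]

/-- `Φ_ξ[g](x)` when the sup-convolution of `g` is the real function `w`. -/
def PhiReal (γ μ : ℝ) (w : ℝ → ℝ) (ξ x : ℝ) : ℝ := 1 - γ + w x - μ * max (ξ - x) 0

theorem Phi_eq_coe_PhiReal (hw : ∀ x, supConv g x = w x) (γ μ ξ x : ℝ) :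
    Phi γ μ g ξ x = PhiReal γ μ w ξ x := by
  rw [Phi_eq_supConv, hw, PhiReal]
  norm_cast

variable {γ μ : ℝ}

theorem continuous_PhiReal (hw : Continuous w) (ξ : ℝ) : Continuous (PhiReal γ μ w ξ) := by
  unfold PhiReal; fun_prop

theorem PhiReal_le_add_mul (hμ : 0 ≤ μ) (ξ ξ' x : ℝ) :
    PhiReal γ μ w ξ x ≤ PhiReal γ μ w ξ' x + μ * |ξ - ξ'| := by
  have h : max (ξ' - x) 0 ≤ max (ξ - x) 0 + |ξ - ξ'| := by
    rcases le_total (ξ - x) 0 with h₁ | h₁ <;> rcases le_total (ξ' - x) 0 with h₂ | h₂ <;>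
      simp only [max_eq_left, max_eq_right, *] <;>
      linarith [neg_abs_le (ξ - ξ'), abs_nonneg (ξ - ξ')]
  simp only [PhiReal]
  nlinarith [mul_le_mul_of_nonneg_left h hμ]

theorem PhiReal_le_of_le_sub_max (hμ : 0 ≤ μ) {B : ℝ} (hwB : ∀ x, w x ≤ B - max x 0) (ξ x : ℝ) :
    PhiReal γ μ w ξ x ≤ 1 - γ + B - min 1 μ * ξ := by
  have h₁ : min 1 μ * ξ ≤ min 1 μ * (max x 0 + max (ξ - x) 0) :=
    mul_le_mul_of_nonneg_left (by linarith [le_max_left x 0, le_max_left (ξ - x) 0])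
      (le_min zero_le_one hμ)
  have h₂ : min 1 μ * max x 0 ≤ max x 0 :=
    mul_le_of_le_one_left (le_max_right x 0) (min_le_left 1 μ)
  have h₃ : min 1 μ * max (ξ - x) 0 ≤ μ * max (ξ - x) 0 :=
    mul_le_mul_of_nonneg_right (min_le_right 1 μ) (le_max_right _ _)
  simp only [PhiReal]
  linarith [hwB x]

theorem bddAbove_range_PhiReal (hμ : 0 ≤ μ) {B : ℝ} (hwB : ∀ x, w x ≤ B) (ξ : ℝ) :
    BddAbove (range (PhiReal γ μ w ξ)) :=
  ⟨1 - γ + B, by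
    rintro _ ⟨x, rfl⟩
    simp only [PhiReal]
    nlinarith [hwB x, le_max_right (ξ - x) 0]⟩

noncomputable def supPhiReal (γ μ : ℝ) (w : ℝ → ℝ) (ξ : ℝ) : ℝ := ⨆ x, PhiReal γ μ w ξ x

theorem iSup_Phi_eq_coe_supPhiReal (hw : ∀ x, supConv g x = w x) (hμ : 0 ≤ μ) {B : ℝ}
    (hwB : ∀ x, w x ≤ B) (ξ : ℝ) : ⨆ x, Phi γ μ g ξ x = supPhiReal γ μ w ξ := by
  simp only [Phi_eq_coe_PhiReal hw, supPhiReal]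
  exact (Monotone.map_ciSup_of_continuousAt continuous_coe_real_ereal.continuousAt
    EReal.coe_strictMono.monotone (bddAbove_range_PhiReal hμ hwB ξ)).symm

theorem lipschitzWith_supPhiReal (hμ : 0 ≤ μ) {B : ℝ} (hwB : ∀ x, w x ≤ B) :
    LipschitzWith (Real.toNNReal μ) (supPhiReal γ μ w) :=
  LipschitzWith.of_le_add_mul' μ fun ξ ξ' => ciSup_le fun x =>
    (PhiReal_le_add_mul hμ ξ ξ' x).trans (by
      rw [Real.dist_eq]
      gcongr
      exact le_ciSup (bddAbove_range_PhiReal hμ hwB ξ') x)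

theorem bddAbove_setOf_le_supPhiReal (hμ : 0 < μ) {B : ℝ} (hwB : ∀ x, w x ≤ B - max x 0)
    (c : ℝ) : BddAbove {ξ | c ≤ supPhiReal γ μ w ξ} := by
  have hm : 0 < min 1 μ := lt_min one_pos hμ
  refine ⟨(1 - γ + B - c) / min 1 μ, fun ξ hξ => ?_⟩
  have := hξ.trans (ciSup_le (PhiReal_le_of_le_sub_max hμ.le hwB ξ))
  rw [le_div_iff₀ hm]
  linarith

end RealValued

namespace IsTravelingWave

variable {γ μ : ℝ} {g : ℝ → EReal} {v L : ℝ} {w : ℝ → ℝ}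

theorem exists_pos (hg : IsTravelingWave γ μ g v L) : ∃ x, 0 < g x := hg.2.1

theorem eq_bot_of_notMem (hg : IsTravelingWave γ μ g v L) {x : ℝ} (hx : x ∉ Icc L 0) :
    g x = ⊥ :=
  hg.2.2.2.2.2.1 x hx

theorem eq_bot_of_pos (hg : IsTravelingWave γ μ g v L) {x : ℝ} (hx : 0 < x) : g x = ⊥ :=
  hg.eq_bot_of_notMem fun h => not_le.2 hx h.2

theorem mem_Icc_of_pos (hg : IsTravelingWave γ μ g v L) {x : ℝ} (hx : 0 < g x) : x ∈ Icc L 0 :=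
  by_contra fun h => by simp [hg.eq_bot_of_notMem h] at hx

theorem pos_of_mem_Ioo (hg : IsTravelingWave γ μ g v L) {x : ℝ} (hx : x ∈ Ioo L 0) : 0 < g x := by
  obtain ⟨b, hb, hxb⟩ := exists_lt_of_lt_csSup hg.2.1 (hg.2.2.2.1 ▸ hx.2)
  obtain ⟨a, ha, hax⟩ := exists_lt_of_csInf_lt hg.2.1 (hg.2.2.2.2.1 ▸ hx.1)
  exact hg.1.pos_of_lt_of_lt hax hxb ha hb

theorem gIter_one (hg : IsTravelingWave γ μ g v L) : gIter γ μ g 1 = fun x => g (x - v) :=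
  funext fun x => by simpa using hg.2.2.2.2.2.2 1 le_rfl x

theorem piE_Phi_sNext (hg : IsTravelingWave γ μ g v L) (x : ℝ) :
    piE (Phi γ μ g (sNext γ μ g) x) = g (x - v) :=
  congrFun hg.gIter_one x

theorem piE_Phi_sNext_comp_sub (hg : IsTravelingWave γ μ g v L) (x : ℝ) :
    piE (Phi γ μ (fun y => g (y - v)) (sNext γ μ (fun y => g (y - v))) x) = g (x - 2 * v) := by
  rw [← hg.gIter_one]
  exact_mod_cast hg.2.2.2.2.2.2 2 one_le_two x

theorem supConv_ne_top (hg : IsTravelingWave γ μ g v L) (x : ℝ) : supConv g x ≠ ⊤ := by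
  intro hx
  have h := hg.piE_Phi_sNext (1 + v)
  rw [Phi_eq_supConv, supConv_eq_top hx, EReal.coe_add_top, EReal.top_sub_coe, add_sub_cancel_right,
    hg.eq_bot_of_pos one_pos, piE_eq_bot_iff] at h
  exact not_top_lt h

theorem exists_supConv_eq_coe (hg : IsTravelingWave γ μ g v L) :
    ∃ w : ℝ → ℝ, ∀ x, supConv g x = w x := by
  obtain ⟨x₀, hx₀⟩ := hg.exists_pos
  exact ⟨fun x => (supConv g x).toReal,
    fun x => (EReal.coe_toReal (hg.supConv_ne_top x) (supConv_ne_bot (ne_bot_of_gt hx₀) x)).symm⟩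

theorem piE_PhiReal_sNext_add (hg : IsTravelingWave γ μ g v L) (hw : ∀ x, supConv g x = w x)
    (x : ℝ) : piE (PhiReal γ μ w (sNext γ μ g) (x + v)) = g x := by
  rw [← Phi_eq_coe_PhiReal hw, hg.piE_Phi_sNext, add_sub_cancel_right]

theorem PhiReal_sNext_pos (hg : IsTravelingWave γ μ g v L) (hw : ∀ x, supConv g x = w x)
    {x : ℝ} (hx : x ∈ Ioo L 0) : 0 < PhiReal γ μ w (sNext γ μ g) (x + v) := by
  have hpos := hg.pos_of_mem_Ioo hx
  rw [← hg.piE_PhiReal_sNext_add hw] at hpos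
  rw [piE_of_ne_bot (ne_bot_of_gt hpos)] at hpos
  exact_mod_cast hpos

theorem PhiReal_sNext_nonpos (hg : IsTravelingWave γ μ g v L) (hw : ∀ x, supConv g x = w x)
    {x : ℝ} (hx : x ∉ Ioo L 0) : PhiReal γ μ w (sNext γ μ g) (x + v) ≤ 0 := by
  have hneg : ∀ y ∈ (Icc L 0)ᶜ, PhiReal γ μ w (sNext γ μ g) (y + v) ≤ 0 := fun y hy => by
    have h := hg.piE_PhiReal_sNext_add hw y
    rw [hg.eq_bot_of_notMem hy, piE_eq_bot_iff] at h
    exact_mod_cast h.le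
  have hc : Continuous fun y => PhiReal γ μ w (sNext γ μ g) (y + v) :=
    (continuous_PhiReal (lipschitzWith_one_of_supConv_eq hw).continuous _).comp
      (continuous_add_const v)
  refine le_on_closure hneg hc.continuousOn continuousOn_const ?_
  rwa [closure_compl, interior_Icc]

theorem left_lt_zero (hg : IsTravelingWave γ μ g v L) : L < 0 := by
  obtain ⟨w, hw⟩ := hg.exists_supConv_eq_coe
  obtain ⟨x₀, hx₀⟩ := hg.exists_pos
  obtain ⟨hLx, hx0⟩ := hg.mem_Icc_of_pos hx₀
  refine hLx.trans_lt (hx0.lt_of_ne ?_)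
  rintro rfl
  have h0 := (piE_le _).trans (EReal.coe_nonpos.2 (hg.PhiReal_sNext_nonpos hw (x := 0) (by simp)))
  rw [hg.piE_PhiReal_sNext_add hw] at h0
  exact not_le.2 hx₀ h0

theorem PhiReal_sNext_nonneg (hg : IsTravelingWave γ μ g v L) (hw : ∀ x, supConv g x = w x)
    {x : ℝ} (hx : x ∈ Icc L 0) : 0 ≤ PhiReal γ μ w (sNext γ μ g) (x + v) := by
  have hc : Continuous fun y => PhiReal γ μ w (sNext γ μ g) (y + v) :=
    (continuous_PhiReal (lipschitzWith_one_of_supConv_eq hw).continuous _).comp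
      (continuous_add_const v)
  rw [← closure_Ioo hg.left_lt_zero.ne] at hx
  exact le_on_closure (fun y hy => (hg.PhiReal_sNext_pos hw hy).le) continuousOn_const
    hc.continuousOn hx

theorem PhiReal_sNext_eq_zero (hg : IsTravelingWave γ μ g v L) (hw : ∀ x, supConv g x = w x)
    {x : ℝ} (hx : x ∈ ({L, 0} : Set ℝ)) : PhiReal γ μ w (sNext γ μ g) (x + v) = 0 := by
  have hIcc : x ∈ Icc L 0 := by rcases hx with rfl | rfl <;> simp [hg.left_lt_zero.le]
  have hIoo : x ∉ Ioo L 0 := by rcases hx with rfl | rfl <;> simp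
  exact le_antisymm (hg.PhiReal_sNext_nonpos hw hIoo) (hg.PhiReal_sNext_nonneg hw hIcc)

theorem eq_Phi_sNext (hg : IsTravelingWave γ μ g v L) {x : ℝ} (hx : x ∈ Icc L 0) :
    g x = Phi γ μ g (sNext γ μ g) (x + v) := by
  obtain ⟨w, hw⟩ := hg.exists_supConv_eq_coe
  rw [Phi_eq_coe_PhiReal hw, ← piE_of_nonneg (EReal.coe_nonneg.2 (hg.PhiReal_sNext_nonneg hw hx)),
    hg.piE_PhiReal_sNext_add hw]

theorem apply_eq_zero (hg : IsTravelingWave γ μ g v L) {x : ℝ} (hx : x ∈ ({L, 0} : Set ℝ)) :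
    g x = 0 := by
  obtain ⟨w, hw⟩ := hg.exists_supConv_eq_coe
  rw [← hg.piE_PhiReal_sNext_add hw, hg.PhiReal_sNext_eq_zero hw hx, EReal.coe_zero,
    piE_of_nonneg le_rfl]

theorem le_coe_of_supConv_eq (hg : IsTravelingWave γ μ g v L) (hw : ∀ x, supConv g x = w x)
    (y : ℝ) : g y ≤ ((w 0 - L : ℝ) : EReal) := by
  by_cases hy : y ∈ Icc L 0
  · refine (le_add_abs_of_supConv_eq hw 0 y).trans (EReal.coe_le_coe_iff.2 ?_)
    rw [zero_sub, abs_neg, abs_of_nonpos hy.2]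
    linarith [hy.1]
  · rw [hg.eq_bot_of_notMem hy]
    exact bot_le

theorem speed_ne_zero_of_sNext_eq_zero (hg : IsTravelingWave γ μ g v L) (hγ : γ < 1)
    (hs : sNext γ μ g = 0) : v ≠ 0 := by
  obtain ⟨w, hw⟩ := hg.exists_supConv_eq_coe
  rintro rfl
  have h0 := hg.PhiReal_sNext_eq_zero hw (x := 0) (by simp)
  have hw0 := le_add_abs_of_supConv_eq hw 0 0
  rw [hg.apply_eq_zero (by simp), sub_zero, abs_zero, add_zero, EReal.coe_nonneg] at hw0
  simp only [PhiReal, hs, add_zero, sub_zero, max_self, mul_zero] at h0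
  linarith

theorem left_add_speed_neg_of_sNext_eq_zero (hg : IsTravelingWave γ μ g v L)
    (hs : sNext γ μ g = 0) : L + v < 0 := by
  obtain ⟨w, hw⟩ := hg.exists_supConv_eq_coe
  by_contra! hLv
  have hL := hg.left_lt_zero
  have h0 := hg.PhiReal_sNext_eq_zero hw (x := 0) (by simp)
  have hL0 := hg.PhiReal_sNext_eq_zero hw (x := L) (by simp)
  -- `Φ_0[g] = 1 - γ + w` on `[L + v, v] ⊆ [0, ∞)`, where `w` has slope `-1`,
  -- so it cannot vanish at both ends
  have hslope := add_sub_le_of_supConv_eq hw (fun _ => hg.eq_bot_of_pos) hLv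
    (by linarith : L + v ≤ 0 + v)
  simp only [PhiReal, hs] at h0 hL0
  rw [max_eq_right (by linarith), mul_zero] at h0 hL0
  linarith

theorem sNext_comp_sub_ne_zero (hg : IsTravelingWave γ μ g v L) (hμ : 0 < μ) (hv : v ≠ 0)
    (hLv : L + v < 0) (hs : sNext γ μ g = 0) : sNext γ μ (fun y => g (y - v)) ≠ 0 := by
  obtain ⟨w, hw⟩ := hg.exists_supConv_eq_coe
  intro hs₁
  obtain ⟨y, hLy, hy⟩ := exists_between (lt_min hg.left_lt_zero (by linarith : L < -v))
  have hyI : y ∈ Ioo L 0 := ⟨hLy, hy.trans_le (min_le_left _ _)⟩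
  have hyv : y + v < 0 := by linarith [min_le_right (0 : ℝ) (-v)]
  -- the first two steps of the dynamic both give `g y` as `1 - γ + w (y + v)` minus a penalty,
  -- `μ (-(y + v))⁺` and `μ (-(y + 2v))⁺` respectively, and these differ since `y < -v`
  have h₁ := hg.eq_Phi_sNext (Ioo_subset_Icc_self hyI)
  have h₂ := hg.piE_Phi_sNext_comp_sub (y + 2 * v)
  rw [Phi_eq_coe_PhiReal hw] at h₁
  rw [hs₁, Phi_comp_sub, Phi_eq_coe_PhiReal hw, show y + 2 * v - 2 * v = y by ring,
    show y + 2 * v - v = y + v by ring, h₁] at h₂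
  rw [piE_of_ne_bot (h₂ ▸ EReal.coe_ne_bot _), EReal.coe_eq_coe_iff] at h₂
  simp only [PhiReal, hs, sub_right_inj] at h₂
  have h₃ := mul_left_cancel₀ hμ.ne' h₂
  rw [max_eq_left (by linarith : (0 : ℝ) ≤ 0 - (y + v))] at h₃
  rcases le_total (0 - v - (y + v)) 0 with h | h
  · rw [max_eq_right h] at h₃
    linarith
  · rw [max_eq_left h] at h₃
    exact hv (by linarith)

/-- If this set were empty, `sNext` would take the junk value `sSup ∅ = 0` (the paper's `-∞`),
both for `g` and for its translate `g (· - v)`. -/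
theorem nonempty_setOf_le_iSup_Phi (hg : IsTravelingWave γ μ g v L) (hγ : γ < 1) (hμ : 0 < μ) :
    {ξ | (γ : EReal) ≤ ⨆ x, Phi γ μ g ξ x}.Nonempty := by
  by_contra hT
  rw [not_nonempty_iff_eq_empty] at hT
  have hs : sNext γ μ g = 0 := by rw [sNext, hT, Real.sSup_empty]
  have hs₁ : sNext γ μ (fun y => g (y - v)) = 0 := by
    simp only [sNext, iSup_Phi_comp_sub]
    rw [eq_empty_of_forall_notMem (s := {ξ | (γ : EReal) ≤ ⨆ x, Phi γ μ g (ξ - v) x})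
      fun ξ => eq_empty_iff_forall_notMem.1 hT (ξ - v), Real.sSup_empty]
  exact hg.sNext_comp_sub_ne_zero hμ (hg.speed_ne_zero_of_sNext_eq_zero hγ hs)
    (hg.left_add_speed_neg_of_sNext_eq_zero hs) hs hs₁

theorem iSup_eq_iSup_Phi_sNext (hg : IsTravelingWave γ μ g v L) :
    ⨆ x, g x = ⨆ x, Phi γ μ g (sNext γ μ g) x := by
  obtain ⟨x₀, hx₀⟩ := hg.exists_pos
  have h₀ := hg.piE_Phi_sNext (x₀ + v)
  rw [add_sub_cancel_right] at h₀
  rw [← (Equiv.subRight v).iSup_comp]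
  simp only [Equiv.subRight_apply, ← hg.piE_Phi_sNext]
  exact iSup_piE ⟨x₀ + v, hx₀.le.trans (h₀ ▸ piE_le _)⟩

theorem iSup_Phi_sNext (hg : IsTravelingWave γ μ g v L) (hγ : γ < 1) (hμ : 0 < μ) :
    ⨆ x, Phi γ μ g (sNext γ μ g) x = γ := by
  obtain ⟨w, hw⟩ := hg.exists_supConv_eq_coe
  have hwB := le_sub_max_of_supConv_eq hw (fun _ => hg.eq_bot_of_pos) (hg.le_coe_of_supConv_eq hw)
  have hwB' : ∀ x, w x ≤ w 0 - L := fun x => (hwB x).trans (sub_le_self _ (le_max_right x 0))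
  have hT : {ξ | (γ : EReal) ≤ ⨆ x, Phi γ μ g ξ x} = {ξ | γ ≤ supPhiReal γ μ w ξ} := by
    simp only [iSup_Phi_eq_coe_supPhiReal hw hμ.le hwB', EReal.coe_le_coe_iff]
  have hs : sNext γ μ g = sSup {ξ | γ ≤ supPhiReal γ μ w ξ} := by rw [sNext, hT]
  rw [iSup_Phi_eq_coe_supPhiReal hw hμ.le hwB', hs,
    (lipschitzWith_supPhiReal hμ.le hwB').continuous.apply_sSup_setOf_le_eq
      (hT ▸ hg.nonempty_setOf_le_iSup_Phi hγ hμ) (bddAbove_setOf_le_supPhiReal hμ hwB γ)]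

end IsTravelingWave

/-- a concave traveling wave `g` with speed `v`, support `[L,0]`
and phenotypic threshold `s = sNext γ μ g` satisfies `g(0) = g(L) = 0`,
`sup g = γ`, and `g(x) = Φ_s[g](x + v)` on `[L,0]`. -/
theorem travelingWave_basic (γ μ : ℝ) (hγ : γ ∈ Set.Ioo (0 : ℝ) 1) (hμ : 0 < μ)
    (g : ℝ → EReal) (v L : ℝ) (hg : IsTravelingWave γ μ g v L) :
    g 0 = 0 ∧ g L = 0 ∧ (⨆ x : ℝ, g x) = (γ : EReal) ∧
    ∀ x ∈ Set.Icc L 0, g x = Phi γ μ g (sNext γ μ g) (x + v) := by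
  refine ⟨hg.apply_eq_zero (by simp), hg.apply_eq_zero (by simp), ?_,
    fun x hx => hg.eq_Phi_sNext hx⟩
  rw [hg.iSup_eq_iSup_Phi_sNext, hg.iSup_Phi_sNext hγ.2 hμ]
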